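/- For every integer k ≥ 0 and every real r > 1, the integral ∫₀^π (sin θ)^k / (1 + r² − 2r cos θ)^{k/2} dθ equals (ω_{k+2}/ω_{k+1}) · r^{−k}, where ω_m is the surface area of the unit sphere in ℝ^m. -/

import Mathlib

open Real MeasureTheory intervalIntegral

/-- Surface area of the unit sphere in ℝ^m: ω_m = 2 π^{m/2} / Γ(m/2). -/
noncomputable def sphereArea (m : ℕ) : ℝ :=
  2 * Real.pi ^ ((m : ℝ) / 2) / Real.Gamma ((m : ℝ) / 2)

/-!
With `c = cos θ` and `a = (k - 1)/2` the integral becomes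
`Z(r) = ∫_{-1}^1 (1 - c²)^a (1 + r² - 2rc)^{-(a + 1/2)} dc`, the mean of the Newtonian potential
`|x - r e₁|^{-k}` over the unit sphere of `ℝ^{k+2}`. For `0 < s < 1`, `s Z'(s)` is a combination
of the integrals with exponents `-(a + 1/2)` and `-(a + 3/2)`, and the change of variables sending
`x` to the other end of the chord through `x` and `s e₁` (a Kelvin inversion) makes this
combination vanish. So `Z` is constant on `[0, 1)`, which is the mean value property, and since
`Z(1/s) = s^k Z(s)` we get `Z(r) = r^{-k} Z(0)`. Finally `Z(0) = ∫₀^π sin^k θ dθ`, which the Wallis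
recursion identifies with `ω_{k+2}/ω_{k+1}`.
-/

open Set

lemma sphereArea_one : sphereArea 1 = 2 := by
  rw [sphereArea, Nat.cast_one, Real.Gamma_one_half_eq, ← Real.sqrt_eq_rpow]
  field_simp

lemma sphereArea_two : sphereArea 2 = 2 * π := by
  simp [sphereArea]

lemma sphereArea_pos {m : ℕ} (hm : m ≠ 0) : 0 < sphereArea m := by
  have := Real.Gamma_pos_of_pos (by positivity : (0 : ℝ) < m / 2)
  unfold sphereArea
  positivity

lemma sphereArea_add_two {m : ℕ} (hm : m ≠ 0) :
    sphereArea (m + 2) = 2 * π / m * sphereArea m := by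
  have hm' : (m : ℝ) / 2 ≠ 0 := by positivity
  rw [sphereArea, sphereArea, Nat.cast_add, Nat.cast_two, add_div, div_self two_ne_zero,
    Real.Gamma_add_one hm', Real.rpow_add_one pi_ne_zero]
  field_simp

theorem integral_sin_pow_eq_sphereArea_div (k : ℕ) :
    ∫ θ in (0:ℝ)..π, sin θ ^ k = sphereArea (k + 2) / sphereArea (k + 1) := by
  induction k using Nat.twoStepInduction with
  | zero => simp [sphereArea_one, sphereArea_two]
  | one => norm_num [sphereArea_add_two, sphereArea_one, sphereArea_two]
  | more k ih _ =>
    have := (sphereArea_pos k.succ_ne_zero).ne'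
    rw [integral_sin_pow, ih, sphereArea_add_two (by omega : k + 2 ≠ 0),
      sphereArea_add_two (by omega : k + 1 ≠ 0)]
    simp only [sin_zero, sin_pi]
    push_cast
    field_simp
    ring

lemma integral_sin_mul_comp_cos {g : ℝ → ℝ} (hg : ContinuousOn g (Icc (-1) 1)) :
    ∫ θ in (0:ℝ)..π, sin θ * g (cos θ) = ∫ c in (-1:ℝ)..1, g c := by
  have hcos : cos '' uIcc 0 π ⊆ Icc (-1) 1 := by
    rintro _ ⟨θ, -, rfl⟩
    exact ⟨neg_one_le_cos θ, cos_le_one θ⟩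
  have := integral_comp_mul_deriv' (fun θ _ => hasDerivAt_cos θ) (by fun_prop) (hg.mono hcos)
  rw [cos_zero, cos_pi, integral_symm (-1) 1] at this
  rw [← neg_neg (∫ c in (-1:ℝ)..1, g c), ← this, ← intervalIntegral.integral_neg]
  simp only [Function.comp_apply, mul_neg, neg_neg, mul_comm]

lemma sin_pow_succ_eq {θ : ℝ} (hθ : θ ∈ Icc 0 π) (n : ℕ) :
    sin θ ^ (n + 1) = sin θ * (1 - cos θ ^ 2) ^ ((n : ℝ) / 2) := by
  rw [← sin_sq, ← rpow_two, ← rpow_mul (sin_nonneg_of_mem_Icc hθ), pow_succ',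
    mul_div_cancel₀ _ two_ne_zero, rpow_natCast]

lemma integral_sin_pow_succ_mul_comp_cos (n : ℕ) {g : ℝ → ℝ}
    (hg : ContinuousOn g (Icc (-1) 1)) :
    ∫ θ in (0:ℝ)..π, sin θ ^ (n + 1) * g (cos θ) =
      ∫ c in (-1:ℝ)..1, (1 - c ^ 2) ^ ((n : ℝ) / 2) * g c := by
  rw [← integral_sin_mul_comp_cos (g := fun c => (1 - c ^ 2) ^ ((n : ℝ) / 2) * g c)
    (((continuous_const.sub (continuous_pow 2)).rpow_const
      fun _ => Or.inr (by positivity)).continuousOn.mul hg)]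
  refine integral_congr fun θ hθ => ?_
  rw [uIcc_of_le pi_pos.le] at hθ
  simp only [sin_pow_succ_eq hθ, mul_assoc]

theorem hasDerivAt_intervalIntegral_of_continuousOn {F F' : ℝ → ℝ → ℝ} {U : Set ℝ}
    {a b x₀ : ℝ} (hU : IsOpen U) (hx₀ : x₀ ∈ U)
    (hF : ∀ x ∈ U, ContinuousOn (F x) (uIcc a b))
    (hF' : ContinuousOn (Function.uncurry F') (U ×ˢ uIcc a b))
    (hdiff : ∀ x ∈ U, ∀ t ∈ uIcc a b, HasDerivAt (fun y => F y t) (F' x t) x) :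
    HasDerivAt (fun x => ∫ t in a..b, F x t) (∫ t in a..b, F' x₀ t) x₀ := by
  obtain ⟨ε, hε, hεU⟩ := Metric.isOpen_iff.mp hU x₀ hx₀
  have hK : Metric.closedBall x₀ (ε / 2) ⊆ U :=
    (Metric.closedBall_subset_ball (half_lt_self hε)).trans hεU
  obtain ⟨C, hC⟩ := ((isCompact_closedBall x₀ (ε / 2)).prod
    isCompact_uIcc).exists_bound_of_continuousOn (hF'.mono (prod_mono hK subset_rfl))
  have hF'₀ : ContinuousOn (F' x₀) (uIcc a b) :=
    hF'.comp (f := fun t => (x₀, t)) (by fun_prop) fun t ht => ⟨hx₀, ht⟩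
  refine (hasDerivAt_integral_of_dominated_loc_of_deriv_le (bound := fun _ => C)
    (Metric.ball_mem_nhds x₀ (half_pos hε)) ?_ ((hF x₀ hx₀).intervalIntegrable)
    ((hF'₀.mono uIoc_subset_uIcc).aestronglyMeasurable measurableSet_uIoc) ?_
    intervalIntegrable_const ?_).2
  · filter_upwards [hU.mem_nhds hx₀] with x hx
    exact ((hF x hx).mono uIoc_subset_uIcc).aestronglyMeasurable measurableSet_uIoc
  · exact ae_of_all _ fun t ht x hx =>
      hC (x, t) ⟨Metric.ball_subset_closedBall hx, uIoc_subset_uIcc ht⟩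
  · exact ae_of_all _ fun t ht x hx =>
      hdiff x (hK (Metric.ball_subset_closedBall hx)) t (uIoc_subset_uIcc ht)

lemma rpow_div_sq_mul_rpow_div {B w : ℝ} (hB : 0 < B) (hw : 0 < w) (a q : ℝ) :
    (B / w ^ 2) ^ (a + 1) * (B / w) ^ q = B ^ (a + q + 1) * w ^ (-q - 2 * a - 2) := by
  simp only [rpow_def_of_pos (div_pos hB (pow_pos hw 2)), rpow_def_of_pos (div_pos hB hw),
    rpow_def_of_pos hB, rpow_def_of_pos hw, ← exp_add, log_div hB.ne' (pow_pos hw 2).ne',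
    log_div hB.ne' hw.ne', log_pow]
  ring_nf

lemma one_add_sq_sub_two_mul_pos {s c : ℝ} (hs : |s| ≠ 1) (hc : c ∈ Icc (-1) 1) :
    0 < 1 + s ^ 2 - 2 * s * c := by
  have h₁ : 0 < (1 - |s|) ^ 2 := by
    have : 1 - |s| ≠ 0 := sub_ne_zero.mpr (Ne.symm hs)
    positivity
  have h₂ : s * c ≤ |s| :=
    calc s * c ≤ |s * c| := le_abs_self _
      _ = |s| * |c| := abs_mul s c
      _ ≤ |s| := mul_le_of_le_one_right (abs_nonneg s) (abs_le.mpr hc)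
  nlinarith [sq_abs s]

/-- For a unit vector `x` with `x₁ = v`, the first coordinate of the other end of the chord of the
unit sphere through `x` and `s e₁`. -/
noncomputable def chordMap (s v : ℝ) : ℝ :=
  (2 * s - (1 + s ^ 2) * v) / (1 + s ^ 2 - 2 * s * v)

section chordMap

variable {s v : ℝ}

lemma hasDerivAt_chordMap (hw : 1 + s ^ 2 - 2 * s * v ≠ 0) :
    HasDerivAt (chordMap s) (-(1 - s ^ 2) ^ 2 / (1 + s ^ 2 - 2 * s * v) ^ 2) v := by
  have hnum := ((hasDerivAt_id' v).const_mul (1 + s ^ 2)).const_sub (2 * s)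
  have hden := ((hasDerivAt_id' v).const_mul (2 * s)).const_sub (1 + s ^ 2)
  refine (hnum.div hden hw).congr_deriv ?_
  ring

lemma one_sub_chordMap_sq (hw : 1 + s ^ 2 - 2 * s * v ≠ 0) :
    1 - chordMap s v ^ 2 = (1 - s ^ 2) ^ 2 * (1 - v ^ 2) / (1 + s ^ 2 - 2 * s * v) ^ 2 := by
  rw [chordMap, div_pow, one_sub_div (pow_ne_zero 2 hw)]
  ring

lemma one_add_sq_sub_two_mul_chordMap (hw : 1 + s ^ 2 - 2 * s * v ≠ 0) :
    1 + s ^ 2 - 2 * s * chordMap s v = (1 - s ^ 2) ^ 2 / (1 + s ^ 2 - 2 * s * v) := by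
  rw [eq_div_iff hw, chordMap, sub_mul, mul_assoc (2 * s), div_mul_cancel₀ _ hw]
  ring

lemma chordMap_neg_one (hs : s ≠ -1) : chordMap s (-1) = 1 := by
  have : 1 + s ^ 2 - 2 * s * -1 ≠ 0 := by
    rw [show 1 + s ^ 2 - 2 * s * -1 = (s + 1) ^ 2 by ring]
    exact pow_ne_zero 2 (by contrapose! hs; linarith)
  exact (div_eq_one_iff_eq this).mpr (by ring)

lemma chordMap_one (hs : s ≠ 1) : chordMap s 1 = -1 := by
  have : 1 + s ^ 2 - 2 * s * 1 ≠ 0 := by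
    rw [show 1 + s ^ 2 - 2 * s * 1 = (s - 1) ^ 2 by ring]
    exact pow_ne_zero 2 (sub_ne_zero.mpr hs)
  exact (div_eq_iff this).mpr (by ring)

lemma mapsTo_chordMap (hs : |s| ≠ 1) : MapsTo (chordMap s) (Icc (-1) 1) (Icc (-1) 1) := by
  intro v hv
  have hw := one_add_sq_sub_two_mul_pos hs hv
  have : 0 ≤ 1 - chordMap s v ^ 2 := by
    rw [one_sub_chordMap_sq hw.ne']
    have : 0 ≤ 1 - v ^ 2 := by nlinarith [hv.1, hv.2]
    positivity
  exact abs_le.mp (abs_le_one_iff_mul_self_le_one.mpr (by nlinarith))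

end chordMap

/-- With `a = (d - 3)/2`, this is, up to normalisation, the mean over the unit sphere of `ℝ^d`
of `|x - s e₁|^{2q}`, written in the coordinate `c = x₁`; the Newtonian kernel `|x - s e₁|^{2-d}`
is `q = -(a + 1/2)`. -/
noncomputable def zonalIntegral (a q s : ℝ) : ℝ :=
  ∫ c in (-1:ℝ)..1, (1 - c ^ 2) ^ a * (1 + s ^ 2 - 2 * s * c) ^ q

lemma zonalIntegral_zero (a q : ℝ) :
    zonalIntegral a q 0 = ∫ c in (-1:ℝ)..1, (1 - c ^ 2) ^ a := by
  simp [zonalIntegral]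

lemma zonalIntegral_inv (a q : ℝ) {s : ℝ} (hs : s ≠ 0) :
    zonalIntegral a q s⁻¹ = (s ^ 2) ^ (-q) * zonalIntegral a q s := by
  rw [zonalIntegral, zonalIntegral, ← intervalIntegral.integral_const_mul]
  refine integral_congr fun c hc => ?_
  rw [uIcc_of_le (by norm_num)] at hc
  have hw : 0 ≤ 1 + s ^ 2 - 2 * s * c := by nlinarith [sq_nonneg (s - c), hc.1, hc.2]
  have : 1 + s⁻¹ ^ 2 - 2 * s⁻¹ * c = (1 + s ^ 2 - 2 * s * c) / s ^ 2 := by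
    field_simp
    ring
  rw [this, div_rpow hw (sq_nonneg s), rpow_neg (sq_nonneg s)]
  ring

section zonalIntegral

variable {a : ℝ}

lemma continuousOn_zonalIntegrand (ha : 0 ≤ a) (q : ℝ) {s : ℝ} (hs : |s| ≠ 1) :
    ContinuousOn (fun c => (1 - c ^ 2) ^ a * (1 + s ^ 2 - 2 * s * c) ^ q) (Icc (-1) 1) :=
  ((continuous_const.sub (continuous_pow 2)).rpow_const fun _ => Or.inr ha).continuousOn.mul
    (ContinuousOn.rpow_const (by fun_prop) fun _ hc =>
      Or.inl (one_add_sq_sub_two_mul_pos hs hc).ne')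

/-- The Kelvin transform, as the change of variables `c = chordMap s v`. -/
lemma zonalIntegral_inversion (ha : 0 ≤ a) (q : ℝ) {s : ℝ} (hs : |s| ≠ 1) :
    zonalIntegral a q s =
      ((1 - s ^ 2) ^ 2) ^ (a + q + 1) * zonalIntegral a (-q - 2 * a - 2) s := by
  set B := (1 - s ^ 2) ^ 2
  have hB : 0 < B := by
    have : 1 - s ^ 2 ≠ 0 := by
      rw [← sq_abs, show 1 - |s| ^ 2 = (1 - |s|) * (1 + |s|) by ring]
      exact mul_ne_zero (sub_ne_zero.mpr (Ne.symm hs)) (by positivity)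
    positivity
  have hw : ∀ v ∈ Icc (-1 : ℝ) 1, 0 < 1 + s ^ 2 - 2 * s * v :=
    fun v hv => one_add_sq_sub_two_mul_pos hs hv
  have hI : uIcc (-1 : ℝ) 1 = Icc (-1) 1 := uIcc_of_le (by norm_num)
  have hσ' : ContinuousOn (fun v => -B / (1 + s ^ 2 - 2 * s * v) ^ 2) (uIcc (-1) 1) :=
    hI ▸ continuousOn_const.div (by fun_prop) fun v hv => pow_ne_zero 2 (hw v hv).ne'
  have hsubst := integral_comp_mul_deriv'
    (fun v hv => hasDerivAt_chordMap (hw v (hI ▸ hv)).ne') hσ'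
    ((continuousOn_zonalIntegrand ha q hs).mono (hI ▸ (mapsTo_chordMap hs).image_subset))
  rw [chordMap_neg_one (fun h => hs (by simp [h])), chordMap_one (fun h => hs (by simp [h])),
    integral_symm (-1) 1] at hsubst
  rw [zonalIntegral, zonalIntegral, ← neg_neg (∫ c in (-1:ℝ)..1, _), ← hsubst,
    ← intervalIntegral.integral_neg, ← intervalIntegral.integral_const_mul]
  refine integral_congr fun v hv => ?_
  rw [hI] at hv
  have hv' : 0 ≤ 1 - v ^ 2 := by nlinarith [hv.1, hv.2]
  have hBw : 0 < B / (1 + s ^ 2 - 2 * s * v) ^ 2 := div_pos hB (pow_pos (hw v hv) 2)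
  have key := rpow_div_sq_mul_rpow_div hB (hw v hv) a q
  rw [rpow_add_one hBw.ne'] at key
  simp only [Function.comp_apply]
  rw [one_sub_chordMap_sq (hw v hv).ne', one_add_sq_sub_two_mul_chordMap (hw v hv).ne',
    mul_div_right_comm, mul_rpow hBw.le hv']
  linear_combination (1 - v ^ 2) ^ a * key

lemma hasDerivAt_zonalIntegral (ha : 0 ≤ a) (q : ℝ) {s : ℝ} (hs : s ∈ Ioo (-1) 1) :
    HasDerivAt (zonalIntegral a q) (∫ c in (-1:ℝ)..1,
      (1 - c ^ 2) ^ a * (q * (1 + s ^ 2 - 2 * s * c) ^ (q - 1) * (2 * s - 2 * c))) s := by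
  have hw : ∀ p ∈ Ioo (-1 : ℝ) 1 ×ˢ Icc (-1) 1, 1 + p.1 ^ 2 - 2 * p.1 * p.2 ≠ 0 :=
    fun p hp => (one_add_sq_sub_two_mul_pos (abs_lt.mpr hp.1).ne hp.2).ne'
  refine hasDerivAt_intervalIntegral_of_continuousOn
    (F := fun x c => (1 - c ^ 2) ^ a * (1 + x ^ 2 - 2 * x * c) ^ q)
    (F' := fun x c => (1 - c ^ 2) ^ a * (q * (1 + x ^ 2 - 2 * x * c) ^ (q - 1) * (2 * x - 2 * c)))
    isOpen_Ioo hs (fun x hx => ?_) ?_ fun x hx c hc => ?_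
  · rw [uIcc_of_le (by norm_num)]
    exact continuousOn_zonalIntegrand ha q (abs_lt.mpr hx).ne
  · rw [uIcc_of_le (by norm_num)]
    refine ContinuousOn.mul ?_ (ContinuousOn.mul (continuousOn_const.mul ?_) (by fun_prop))
    · exact ((continuous_const.sub (continuous_pow 2)).rpow_const
        fun _ => Or.inr ha).comp_continuousOn continuous_snd.continuousOn
    · exact ContinuousOn.rpow_const (by fun_prop) fun p hp => Or.inl (hw p hp)
  · rw [uIcc_of_le (by norm_num)] at hc
    have hw' : HasDerivAt (fun y => 1 + y ^ 2 - 2 * y * c) (2 * x - 2 * c) x := by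
      refine (((hasDerivAt_pow 2 x).const_add 1).sub
        (((hasDerivAt_id' x).const_mul 2).mul_const c)).congr_deriv ?_
      ring
    refine ((hw'.rpow_const (p := q) (Or.inl (hw (x, c) ⟨hx, hc⟩))).const_mul
      ((1 - c ^ 2) ^ a)).congr_deriv ?_
    ring

lemma hasDerivAt_zonalIntegral_newtonian (ha : 0 ≤ a) {s : ℝ} (hs : s ∈ Ioo (-1) 1)
    (hs₀ : s ≠ 0) : HasDerivAt (zonalIntegral a (-(a + 1 / 2))) 0 s := by
  set q := -(a + 1 / 2)
  have hs₁ : |s| ≠ 1 := (abs_lt.mpr hs).ne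
  have hinv : zonalIntegral a q s = (1 - s ^ 2) * zonalIntegral a (q - 1) s := by
    rw [zonalIntegral_inversion ha q hs₁, show a + q + 1 = 1 / 2 by ring,
      show -q - 2 * a - 2 = q - 1 by ring, ← sqrt_eq_rpow, sqrt_sq (by nlinarith [hs.1, hs.2])]
  have hint (p : ℝ) : IntervalIntegrable
      (fun c : ℝ => (1 - c ^ 2) ^ a * (1 + s ^ 2 - 2 * s * c) ^ p) volume (-1) 1 := by
    apply ContinuousOn.intervalIntegrable
    rw [uIcc_of_le (by norm_num)]
    exact continuousOn_zonalIntegrand ha p hs₁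
  -- `s (2s - 2c) = w - (1 - s²)` with `w = 1 + s² - 2sc`
  have key : s * ∫ c in (-1:ℝ)..1,
      (1 - c ^ 2) ^ a * (q * (1 + s ^ 2 - 2 * s * c) ^ (q - 1) * (2 * s - 2 * c)) =
      q * (zonalIntegral a q s - (1 - s ^ 2) * zonalIntegral a (q - 1) s) := by
    rw [zonalIntegral, zonalIntegral, ← intervalIntegral.integral_const_mul,
      ← intervalIntegral.integral_const_mul,
      ← integral_sub (hint q) ((hint (q - 1)).const_mul _), ← intervalIntegral.integral_const_mul]
    refine integral_congr fun c hc => ?_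
    rw [uIcc_of_le (by norm_num)] at hc
    have hw := (one_add_sq_sub_two_mul_pos hs₁ hc).ne'
    have hq : (1 + s ^ 2 - 2 * s * c) ^ q =
        (1 + s ^ 2 - 2 * s * c) ^ (q - 1) * (1 + s ^ 2 - 2 * s * c) := by
      rw [← rpow_add_one hw, sub_add_cancel]
    rw [hq]
    ring
  rw [hinv, sub_self, mul_zero, mul_eq_zero] at key
  convert hasDerivAt_zonalIntegral ha q hs using 1
  exact (key.resolve_left hs₀).symm

lemma zonalIntegral_newtonian_of_nonneg_of_lt_one (ha : 0 ≤ a) {s : ℝ} (hs₀ : 0 ≤ s)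
    (hs₁ : s < 1) :
    zonalIntegral a (-(a + 1 / 2)) s = ∫ c in (-1:ℝ)..1, (1 - c ^ 2) ^ a := by
  rw [← zonalIntegral_zero a (-(a + 1 / 2))]
  rcases hs₀.eq_or_lt with rfl | hs₀
  · rfl
  have hmem : ∀ x ∈ Icc 0 s, x ∈ Ioo (-1 : ℝ) 1 :=
    fun x hx => ⟨by linarith [hx.1], hx.2.trans_lt hs₁⟩
  obtain ⟨x, hx, hslope⟩ := exists_hasDerivAt_eq_slope (zonalIntegral a (-(a + 1 / 2)))
    (fun _ => 0) hs₀
    (fun x hx => (hasDerivAt_zonalIntegral ha _ (hmem x hx)).continuousAt.continuousWithinAt)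
    (fun x hx => hasDerivAt_zonalIntegral_newtonian ha (hmem x (Ioo_subset_Icc_self hx)) hx.1.ne')
  rw [eq_comm, div_eq_zero_iff, sub_eq_zero, sub_eq_zero] at hslope
  exact hslope.resolve_right hs₀.ne'

lemma zonalIntegral_newtonian_of_one_lt (ha : 0 ≤ a) {r : ℝ} (hr : 1 < r) :
    zonalIntegral a (-(a + 1 / 2)) r =
      r ^ (-(2 * a + 1)) * ∫ c in (-1:ℝ)..1, (1 - c ^ 2) ^ a := by
  have hr₀ : 0 < r := one_pos.trans hr
  rw [← zonalIntegral_newtonian_of_nonneg_of_lt_one ha (inv_nonneg.mpr hr₀.le)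
      (inv_lt_one_of_one_lt₀ hr), ← inv_inv r, zonalIntegral_inv a _ (inv_ne_zero hr₀.ne'),
    inv_inv, neg_neg, inv_pow, inv_rpow (sq_nonneg r), ← rpow_natCast, ← rpow_mul hr₀.le,
    ← rpow_neg hr₀.le]
  ring_nf

end zonalIntegral

theorem stmt1 (k : ℕ) (r : ℝ) (hr : 1 < r) :
    ∫ θ in (0:ℝ)..Real.pi,
        (Real.sin θ) ^ k / (1 + r ^ 2 - 2 * r * Real.cos θ) ^ ((k : ℝ) / 2)
      = sphereArea (k + 2) / sphereArea (k + 1) * r ^ (-(k : ℝ)) := by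
  cases k with
  | zero => simpa using integral_sin_pow_eq_sphereArea_div 0
  | succ n =>
    have hr₁ : |r| ≠ 1 := by rw [abs_of_pos (one_pos.trans hr)]; exact hr.ne'
    have hw (θ : ℝ) : 0 < 1 + r ^ 2 - 2 * r * cos θ :=
      one_add_sq_sub_two_mul_pos hr₁ ⟨neg_one_le_cos θ, cos_le_one θ⟩
    calc _ = ∫ θ in (0:ℝ)..π,
          sin θ ^ (n + 1) * (1 + r ^ 2 - 2 * r * cos θ) ^ (-((n : ℝ) / 2 + 1 / 2)) := by
          refine integral_congr fun θ _ => ?_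
          rw [div_eq_mul_inv, ← rpow_neg (hw θ).le]
          push_cast
          ring_nf
      _ = zonalIntegral ((n : ℝ) / 2) (-((n : ℝ) / 2 + 1 / 2)) r :=
          integral_sin_pow_succ_mul_comp_cos n (g := fun c => (1 + r ^ 2 - 2 * r * c) ^ _)
            (ContinuousOn.rpow_const (by fun_prop) fun _ hc =>
              Or.inl (one_add_sq_sub_two_mul_pos hr₁ hc).ne')
      _ = r ^ (-(2 * ((n : ℝ) / 2) + 1)) * ∫ θ in (0:ℝ)..π, sin θ ^ (n + 1) := by
          have := integral_sin_pow_succ_mul_comp_cos n (g := fun _ => 1) continuousOn_const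
          simp only [mul_one] at this
          rw [zonalIntegral_newtonian_of_one_lt (by positivity) hr, this]
      _ = _ := by
          rw [integral_sin_pow_eq_sphereArea_div]
          push_cast
          ring_nf
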